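/- Let k ≥ 2 be a natural number and ε_1,...,ε_k positive reals with μ = ∑_{i=1}^k ε_i. Then ∫_U (∏_{j=1}^{k−1} x_j^{ε_j − 1}) · (1 − ∑_{j=1}^{k−1} x_j)^{ε_k − 1} dx = (∏_{i=1}^k Γ(ε_i)) / Γ(μ), where U = {x ∈ ℝ^{k−1} : x_j > 0 for all j and ∑_{j=1}^{k−1} x_j < 1} and the integral is with respect to (k−1)-dimensional Lebesgue measure. -/

import Mathlib

/-!
Integrate out the last coordinate. For `y` in the `n`-dimensional simplex the slice is
`t ∈ (0, c)` with `c = 1 - ∑ y`, and there the integrand is `P(y) t^(a-1) (c-t)^(b-1)`, whose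
integral is `P(y) c^(a+b-1) B(a, b)`: the Dirichlet kernel in one dimension less with the last two
parameters `a, b` merged into `a + b`. Induction on the dimension and `B(a, b) = Γ(a)Γ(b)/Γ(a+b)`
then telescope the Gamma factors.
-/

open MeasureTheory Set ProbabilityTheory
open scoped ENNReal

def openSimplex (n : ℕ) : Set (Fin n → ℝ) := {x | (∀ j, 0 < x j) ∧ ∑ j, x j < 1}

theorem measurableSet_openSimplex (n : ℕ) : MeasurableSet (openSimplex n) := by
  unfold openSimplex
  measurability

theorem openSimplex_zero : openSimplex 0 = univ := by
  simp [openSimplex]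

theorem snoc_mem_openSimplex_iff {n : ℕ} {y : Fin n → ℝ} {t : ℝ} :
    (Fin.snoc y t : Fin (n + 1) → ℝ) ∈ openSimplex (n + 1) ↔
      y ∈ openSimplex n ∧ t ∈ Ioo 0 (1 - ∑ j, y j) := by
  simp only [openSimplex, mem_ofPred_eq, Fin.forall_fin_succ', Fin.snoc_castSucc, Fin.snoc_last,
    Fin.sum_univ_castSucc, mem_Ioo]
  constructor
  · rintro ⟨⟨hy, ht⟩, hsum⟩
    exact ⟨⟨hy, by linarith⟩, ht, by linarith⟩
  · rintro ⟨⟨hy, -⟩, ht, htsum⟩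
    exact ⟨⟨hy, ht⟩, by linarith⟩

theorem lintegral_openSimplex_succ {n : ℕ} {f : (Fin (n + 1) → ℝ) → ℝ≥0∞}
    (hf : Measurable f) :
    ∫⁻ x in openSimplex (n + 1), f x =
      ∫⁻ y in openSimplex n, ∫⁻ t in Ioo 0 (1 - ∑ j, y j), f (Fin.snoc y t) := by
  have hsnoc : MeasurePreserving
      (fun p : ℝ × (Fin n → ℝ) => (Fin.snoc p.2 p.1 : Fin (n + 1) → ℝ)) := by
    convert (volume_preserving_piFinSuccAbove (fun _ : Fin (n + 1) => ℝ) (Fin.last n)).symm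
      using 1
    ext p : 1
    simp [Fin.snocEquiv]
  have hslice : ∀ y, ∫⁻ t, (openSimplex (n + 1)).indicator f (Fin.snoc y t) =
      (openSimplex n).indicator
        (fun y => ∫⁻ t in Ioo 0 (1 - ∑ j, y j), f (Fin.snoc y t)) y := by
    intro y
    by_cases hy : y ∈ openSimplex n
    · rw [indicator_of_mem hy, ← lintegral_indicator measurableSet_Ioo]
      simp [indicator, snoc_mem_openSimplex_iff, hy]
    · simp [indicator, snoc_mem_openSimplex_iff, hy]
  rw [← lintegral_indicator (measurableSet_openSimplex _),
    ← hsnoc.lintegral_comp (hf.indicator (measurableSet_openSimplex _)), Measure.volume_eq_prod,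
    lintegral_prod_symm' (fun p => (openSimplex (n + 1)).indicator f (Fin.snoc p.2 p.1))
      ((hf.indicator (measurableSet_openSimplex _)).comp hsnoc.measurable)]
  simp_rw [hslice]
  rw [lintegral_indicator (measurableSet_openSimplex _)]

theorem integral_rpow_mul_sub_rpow {a b c : ℝ} (ha : 0 < a) (hb : 0 < b) (hc : 0 < c) :
    ∫ x in 0..c, x ^ (a - 1) * (c - x) ^ (b - 1) = c ^ (a + b - 1) * beta a b := by
  suffices h : ((∫ x in 0..c, x ^ (a - 1) * (c - x) ^ (b - 1) : ℝ) : ℂ) =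
      ((c ^ (a + b - 1) * beta a b : ℝ) : ℂ) from mod_cast h
  have integrand : ∀ x ∈ Ioc 0 c, ((x ^ (a - 1) * (c - x) ^ (b - 1) : ℝ) : ℂ) =
      (x : ℂ) ^ ((a : ℂ) - 1) * ((c : ℂ) - x) ^ ((b : ℂ) - 1) := fun x hx => by
    rw [Complex.ofReal_mul, Complex.ofReal_cpow hx.1.le, Complex.ofReal_cpow (sub_nonneg.2 hx.2)]
    push_cast; rfl
  rw [← intervalIntegral.integral_ofReal, intervalIntegral.integral_of_le hc.le,
    setIntegral_congr_fun measurableSet_Ioc integrand, ← intervalIntegral.integral_of_le hc.le,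
    Complex.betaIntegral_scaled _ _ hc,
    Complex.betaIntegral_eq_Gamma_mul_div _ _ (by simpa) (by simpa)]
  rw [beta, Complex.ofReal_mul, Complex.ofReal_cpow hc.le, Complex.ofReal_div, Complex.ofReal_mul,
    ← Complex.Gamma_ofReal, ← Complex.Gamma_ofReal, ← Complex.Gamma_ofReal]
  push_cast; rfl

theorem lintegral_Ioo_rpow_mul_sub_rpow {a b c : ℝ} (ha : 0 < a) (hb : 0 < b) (hc : 0 < c) :
    ∫⁻ x in Ioo 0 c, ENNReal.ofReal (x ^ (a - 1) * (c - x) ^ (b - 1)) =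
      ENNReal.ofReal (c ^ (a + b - 1) * beta a b) := by
  have hpos : 0 < c ^ (a + b - 1) * beta a b := mul_pos (by positivity) (beta_pos ha hb)
  have hint : IntegrableOn (fun x : ℝ => x ^ (a - 1) * (c - x) ^ (b - 1)) (Ioc 0 c) :=
    (intervalIntegrable_iff_integrableOn_Ioc_of_le hc.le).1 <|
      intervalIntegral.intervalIntegrable_of_integral_ne_zero <|
      (integral_rpow_mul_sub_rpow ha hb hc).trans_ne hpos.ne'
  have hnonneg :
      0 ≤ᵐ[volume.restrict (Ioo 0 c)] fun x : ℝ => x ^ (a - 1) * (c - x) ^ (b - 1) :=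
    (ae_restrict_iff' measurableSet_Ioo).2 <| .of_forall fun x hx =>
      mul_nonneg (Real.rpow_nonneg hx.1.le _) (Real.rpow_nonneg (sub_nonneg.2 hx.2.le) _)
  rw [← ofReal_integral_eq_lintegral_ofReal (hint.mono_set Ioo_subset_Ioc_self) hnonneg,
    ← integral_Ioc_eq_integral_Ioo, ← intervalIntegral.integral_of_le hc.le,
    integral_rpow_mul_sub_rpow ha hb hc]

section DirichletKernel

variable {n : ℕ}

noncomputable def dirichletKernel (ε : Fin (n + 1) → ℝ) (x : Fin n → ℝ) : ℝ :=
  (∏ j, x j ^ (ε j.castSucc - 1)) * (1 - ∑ j, x j) ^ (ε (Fin.last n) - 1)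

theorem measurable_dirichletKernel (ε : Fin (n + 1) → ℝ) :
    Measurable (dirichletKernel ε) := by
  unfold dirichletKernel
  fun_prop

theorem dirichletKernel_nonneg (ε : Fin (n + 1) → ℝ) {x : Fin n → ℝ}
    (hx : x ∈ openSimplex n) : 0 ≤ dirichletKernel ε x :=
  mul_nonneg (Finset.prod_nonneg fun j _ => Real.rpow_nonneg (hx.1 j).le _)
    (Real.rpow_nonneg (sub_nonneg.2 hx.2.le) _)

theorem dirichletKernel_fin_zero (ε : Fin 1 → ℝ) (x : Fin 0 → ℝ) :
    dirichletKernel ε x = 1 := by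
  simp [dirichletKernel]

def mergeLast (ε : Fin (n + 2) → ℝ) : Fin (n + 1) → ℝ :=
  Fin.snoc (fun j => ε j.castSucc.castSucc) (ε (Fin.last n).castSucc + ε (Fin.last (n + 1)))

theorem sum_mergeLast (ε : Fin (n + 2) → ℝ) : ∑ i, mergeLast ε i = ∑ i, ε i := by
  simp [mergeLast, Fin.sum_univ_castSucc, add_assoc]

theorem prod_Gamma_mergeLast_mul_beta (ε : Fin (n + 2) → ℝ)
    (hΓ : Real.Gamma (ε (Fin.last n).castSucc + ε (Fin.last (n + 1))) ≠ 0) :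
    (∏ i, Real.Gamma (mergeLast ε i)) * beta (ε (Fin.last n).castSucc) (ε (Fin.last (n + 1))) =
      ∏ i, Real.Gamma (ε i) := by
  simp only [mergeLast, beta, Fin.prod_univ_castSucc, Fin.snoc_castSucc, Fin.snoc_last]
  field_simp

theorem dirichletKernel_snoc (ε : Fin (n + 2) → ℝ) (y : Fin n → ℝ) (t : ℝ) :
    dirichletKernel ε (Fin.snoc y t) = (∏ j, y j ^ (ε j.castSucc.castSucc - 1)) *
      (t ^ (ε (Fin.last n).castSucc - 1) *
        (1 - ∑ j, y j - t) ^ (ε (Fin.last (n + 1)) - 1)) := by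
  simp [dirichletKernel, Fin.prod_univ_castSucc, Fin.sum_univ_castSucc, sub_add_eq_sub_sub,
    mul_assoc]

theorem dirichletKernel_mergeLast (ε : Fin (n + 2) → ℝ) (y : Fin n → ℝ) :
    dirichletKernel (mergeLast ε) y = (∏ j, y j ^ (ε j.castSucc.castSucc - 1)) *
      (1 - ∑ j, y j) ^ (ε (Fin.last n).castSucc + ε (Fin.last (n + 1)) - 1) := by
  simp [dirichletKernel, mergeLast]

theorem lintegral_dirichletKernel_snoc {ε : Fin (n + 2) → ℝ} (hε : ∀ i, 0 < ε i)
    {y : Fin n → ℝ} (hy : y ∈ openSimplex n) :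
    ∫⁻ t in Ioo 0 (1 - ∑ j, y j), ENNReal.ofReal (dirichletKernel ε (Fin.snoc y t)) =
      ENNReal.ofReal (dirichletKernel (mergeLast ε) y *
        beta (ε (Fin.last n).castSucc) (ε (Fin.last (n + 1)))) := by
  have hP : 0 ≤ ∏ j, y j ^ (ε j.castSucc.castSucc - 1) :=
    Finset.prod_nonneg fun j _ => Real.rpow_nonneg (hy.1 j).le _
  simp_rw [dirichletKernel_snoc, ENNReal.ofReal_mul hP]
  rw [lintegral_const_mul _ (by fun_prop), lintegral_Ioo_rpow_mul_sub_rpow (hε _) (hε _)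
    (sub_pos.2 hy.2), ← ENNReal.ofReal_mul hP, dirichletKernel_mergeLast, mul_assoc]

end DirichletKernel

theorem prod_Gamma_div_Gamma_sum_pos {ι : Type*} [Fintype ι] [Nonempty ι] {ε : ι → ℝ}
    (hε : ∀ i, 0 < ε i) : 0 < (∏ i, Real.Gamma (ε i)) / Real.Gamma (∑ i, ε i) :=
  div_pos (Finset.prod_pos fun i _ => Real.Gamma_pos_of_pos (hε i))
    (Real.Gamma_pos_of_pos (Finset.sum_pos (fun i _ => hε i) Finset.univ_nonempty))

theorem lintegral_openSimplex_dirichletKernel (n : ℕ) {ε : Fin (n + 1) → ℝ}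
    (hε : ∀ i, 0 < ε i) :
    ∫⁻ x in openSimplex n, ENNReal.ofReal (dirichletKernel ε x) =
      ENNReal.ofReal ((∏ i, Real.Gamma (ε i)) / Real.Gamma (∑ i, ε i)) := by
  induction n with
  | zero =>
    simp [openSimplex_zero, dirichletKernel_fin_zero, volume_pi,
      (Real.Gamma_pos_of_pos (hε 0)).ne']
  | succ n ih =>
    set a := ε (Fin.last n).castSucc
    set b := ε (Fin.last (n + 1))
    have hmerge : ∀ i, 0 < mergeLast ε i := Fin.lastCases
      (by simpa [mergeLast] using add_pos (hε _) (hε _))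
      (fun j => by simpa [mergeLast] using hε _)
    calc ∫⁻ x in openSimplex (n + 1), ENNReal.ofReal (dirichletKernel ε x)
        = ∫⁻ y in openSimplex n,
            ENNReal.ofReal (dirichletKernel (mergeLast ε) y) * ENNReal.ofReal (beta a b) := by
          rw [lintegral_openSimplex_succ (measurable_dirichletKernel ε).ennreal_ofReal]
          refine setLIntegral_congr_fun (measurableSet_openSimplex n) fun y hy => ?_
          rw [lintegral_dirichletKernel_snoc hε hy,
            ENNReal.ofReal_mul (dirichletKernel_nonneg _ hy)]
      _ = ENNReal.ofReal ((∏ i, Real.Gamma (mergeLast ε i)) /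
            Real.Gamma (∑ i, mergeLast ε i) * beta a b) := by
          rw [lintegral_mul_const _ (measurable_dirichletKernel _).ennreal_ofReal, ih hmerge,
            ← ENNReal.ofReal_mul (prod_Gamma_div_Gamma_sum_pos hmerge).le]
      _ = ENNReal.ofReal ((∏ i, Real.Gamma (ε i)) / Real.Gamma (∑ i, ε i)) := by
          rw [div_mul_eq_mul_div, prod_Gamma_mergeLast_mul_beta ε
            (Real.Gamma_pos_of_pos (add_pos (hε _) (hε _))).ne', sum_mergeLast]

theorem dirichlet_integral_general (n : ℕ)
    (ε : Fin (n + 1) → ℝ) (hε : ∀ i, 0 < ε i) (μ : ℝ) (hμ : μ = ∑ i : Fin (n + 1), ε i)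
    (U : Set (Fin n → ℝ)) (hU : U = {z | (∀ j, 0 < z j) ∧ ∑ j : Fin n, z j < 1}) :
    ∫ x in U,
        (∏ j : Fin n, (x j) ^ (ε j.castSucc - 1)) *
          (1 - ∑ j : Fin n, x j) ^ (ε (Fin.last n) - 1) =
      (∏ i : Fin (n + 1), Real.Gamma (ε i)) / Real.Gamma μ := by
  subst hμ hU
  change ∫ x in openSimplex n, dirichletKernel ε x = _
  have hnonneg : 0 ≤ᵐ[volume.restrict (openSimplex n)] dirichletKernel ε :=
    (ae_restrict_iff' (measurableSet_openSimplex n)).2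
      (.of_forall fun _ => dirichletKernel_nonneg ε)
  rw [integral_eq_lintegral_of_nonneg_ae hnonneg
      (measurable_dirichletKernel ε).aestronglyMeasurable,
    lintegral_openSimplex_dirichletKernel n hε,
    ENNReal.toReal_ofReal (prod_Gamma_div_Gamma_sum_pos hε).le]

/-- The Dirichlet integral over the open simplex:
∫_U (∏ x_j^{ε_j−1}) (1 − ∑ x_j)^{ε_k−1} dx = (∏ Γ(ε_i)) / Γ(μ), where k = n + 1 ≥ 2. -/
theorem dirichlet_integral (n : ℕ) (hn : 1 ≤ n)
    (ε : Fin (n + 1) → ℝ) (hε : ∀ i, 0 < ε i) (μ : ℝ) (hμ : μ = ∑ i : Fin (n + 1), ε i)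
    (U : Set (Fin n → ℝ)) (hU : U = {z | (∀ j, 0 < z j) ∧ ∑ j : Fin n, z j < 1}) :
    ∫ x in U,
        (∏ j : Fin n, (x j) ^ (ε j.castSucc - 1)) *
          (1 - ∑ j : Fin n, x j) ^ (ε (Fin.last n) - 1) =
      (∏ i : Fin (n + 1), Real.Gamma (ε i)) / Real.Gamma μ :=
  dirichlet_integral_general n ε hε μ hμ U hU
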